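/- arXiv:1404.6103 — 5 statements merged into one kernel-verified Lean document; each statement's English description precedes it below -/
import Mathlib

section
/- In an assignment game with values in [0,1], if in a core allocation there is a directed path of length k alternating between firms and workers — where each firm f on the path points to a worker w with α_{f,w} ≥ 1 − ε and each worker on the path points to the firm that employs her — from firm i ending at an unmatched worker, then u_i ≥ 1 − kε. -/
/-- In an assignment game with values in `[0,1]`, if in a core allocation there is a
directed path of length `k` — alternating firm-to-worker edges with `α ≥ 1 - ε` and
worker-to-employing-firm edges — from firm `i` ending at an unmatched worker, then
`u i ≥ 1 - k * ε`. -/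
theorem path_to_unmatched_worker
    {F W : Type*} [Fintype F] [Fintype W]
    (α : F → W → ℝ) (hα : ∀ i j, α i j ∈ Set.Icc (0 : ℝ) 1)
    (μ : F → Option W) (ν : W → Option F)
    (hμν : ∀ i j, μ i = some j ↔ ν j = some i)
    (u : F → ℝ) (v : W → ℝ)
    (hu : ∀ i, 0 ≤ u i) (hv : ∀ j, 0 ≤ v j)
    (hmatch : ∀ i j, μ i = some j → u i + v j = α i j)
    (huf : ∀ i, μ i = none → u i = 0)
    (hvw : ∀ j, ν j = none → v j = 0)
    (hcore : ∀ i j, α i j ≤ u i + v j)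
    (ε : ℝ) (hε : 0 < ε)
    (k : ℕ) (hk : 1 ≤ k)
    (f : ℕ → F) (w : ℕ → W) (i : F)
    (hstart : f 0 = i)
    (hpoint : ∀ t < k, 1 - ε ≤ α (f t) (w t))
    (hemploy : ∀ t, t + 1 < k → ν (w t) = some (f (t + 1)))
    (hlast : ν (w (k - 1)) = none) :
    u i ≥ 1 - k * ε := by
  have claim : ∀ m, m < k → 1 - (m + 1 : ℝ) * ε ≤ u (f (k - 1 - m)) := by
    intro m
    induction m with
    | zero =>
      intro _
      have hv0 : v (w (k - 1)) = 0 := hvw _ hlast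
      have h1 := hcore (f (k - 1)) (w (k - 1))
      have h2 := hpoint (k - 1) (by omega)
      simp only [Nat.sub_zero]
      push_cast
      linarith
    | succ m ih =>
      intro hm
      set t := k - 1 - (m + 1) with ht
      have ht1 : t + 1 = k - 1 - m := by omega
      have ht2 : t + 1 < k := by omega
      have hμ : μ (f (t + 1)) = some (w t) := (hμν _ _).mpr (hemploy t ht2)
      have hmt := hmatch _ _ hμ
      have hαle : α (f (t + 1)) (w t) ≤ 1 := (hα _ _).2
      have hih := ih (by omega)
      rw [← ht1] at hih
      have h1 := hcore (f t) (w t)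
      have h2 := hpoint t (by omega)
      have h3 := hv (w t)
      push_cast
      linarith
  have hfin := claim (k - 1) (by omega)
  have h0 : k - 1 - (k - 1) = 0 := by omega
  rw [h0, hstart] at hfin
  have hcast : ((k - 1 : ℕ) + 1 : ℝ) = (k : ℝ) := by
    have h : k - 1 + 1 = k := by omega
    exact_mod_cast congrArg (Nat.cast : ℕ → ℝ) h
  rw [hcast] at hfin
  linarith
end

section
/- In an assignment game with values in [0,1], if in a core allocation there is a directed path of length k (alternating firm-to-worker edges with α ≥ 1 − ε and worker-to-employing-firm edges) from firm i to firm i', then u_i ≥ u_{i'} − kε. -/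
/-- In an assignment game with values in `[0,1]`, if in a core allocation there is a
directed path of length `k` (alternating firm-to-worker edges with `α ≥ 1 - ε` and
worker-to-employing-firm edges) from firm `i` to firm `i'`, then `u i ≥ u i' - k * ε`. -/
theorem path_between_firms
    {F W : Type*} [Fintype F] [Fintype W]
    (α : F → W → ℝ) (hα : ∀ i j, α i j ∈ Set.Icc (0 : ℝ) 1)
    (μ : F → Option W) (ν : W → Option F)
    (hμν : ∀ i j, μ i = some j ↔ ν j = some i)
    (u : F → ℝ) (v : W → ℝ)
    (hu : ∀ i, 0 ≤ u i) (hv : ∀ j, 0 ≤ v j)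
    (hmatch : ∀ i j, μ i = some j → u i + v j = α i j)
    (huf : ∀ i, μ i = none → u i = 0)
    (hvw : ∀ j, ν j = none → v j = 0)
    (hcore : ∀ i j, α i j ≤ u i + v j)
    (ε : ℝ) (hε : 0 < ε)
    (k : ℕ) (hk : 1 ≤ k)
    (f : ℕ → F) (w : ℕ → W) (i i' : F)
    (hstart : f 0 = i) (hend : f k = i')
    (hpoint : ∀ t < k, 1 - ε ≤ α (f t) (w t))
    (hemploy : ∀ t < k, ν (w t) = some (f (t + 1))) :
    u i ≥ u i' - k * ε := by
  have key : ∀ t ≤ k, u (f 0) ≥ u (f t) - t * ε := by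
    intro t ht
    induction t with
    | zero => simp
    | succ n ih =>
      have hn : n < k := ht
      have ih' := ih (le_of_lt hn)
      have hμ : μ (f (n + 1)) = some (w n) := (hμν _ _).mpr (hemploy n hn)
      have hm := hmatch _ _ hμ
      have hc := hcore (f n) (w n)
      have h1 : α (f (n+1)) (w n) ≤ 1 := (hα _ _).2
      have hp := hpoint n hn
      have step : u (f n) ≥ u (f (n+1)) - ε := by linarith
      have : ((n : ℝ) + 1) * ε = n * ε + ε := by ring
      push_cast
      linarith
  have := key k le_rfl
  rw [hstart, hend] at this
  linarith
end

section
/- In the same random bipartite graph model with n firms, n + k workers (0 ≤ k ≤ n), and each firm pointing to d = ⌈32·((n+k)/n)·log n⌉ uniformly random distinct workers independently, with probability at least 1 − 1/n², every set S of firms with |S| = ⌊n/10⌋ satisfies |N(S)| ≥ 0.99·(n + k). -/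
set_option maxRecDepth 8000
set_option maxHeartbeats 1000000

open Finset

lemma choose_ratio_nat (t m : ℕ) (h : t ≤ m) (d : ℕ) :
    t.choose d * m ^ d ≤ m.choose d * t ^ d := by
  induction d with
  | zero => simp
  | succ d ih =>
    have key : (t - d) * m ≤ (m - d) * t := by
      rw [Nat.sub_mul, Nat.sub_mul, Nat.mul_comm m t]
      exact Nat.sub_le_sub_left (Nat.mul_le_mul_left d h) _
    have h1 := Nat.choose_succ_right_eq t d
    have h2 := Nat.choose_succ_right_eq m d
    have hmul := Nat.mul_le_mul ih key
    refine Nat.le_of_mul_le_mul_left ?_ (Nat.succ_pos d)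
    calc (d+1) * (t.choose (d+1) * m ^ (d+1))
        = (t.choose (d+1) * (d+1)) * (m ^ d * m) := by ring
      _ = (t.choose d * (t - d)) * (m ^ d * m) := by rw [h1]
      _ = (t.choose d * m ^ d) * ((t - d) * m) := by ring
      _ ≤ (m.choose d * t ^ d) * ((m - d) * t) := hmul
      _ = (m.choose d * (m - d)) * (t ^ d * t) := by ring
      _ = (m.choose (d+1) * (d+1)) * (t ^ d * t) := by rw [h2]
      _ = (d+1) * (m.choose (d+1) * t ^ (d+1)) := by ring

lemma choose_le_two_pow' (n k : ℕ) : n.choose k ≤ 2 ^ n := by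
  rcases le_or_gt k n with h | h
  · calc n.choose k ≤ ∑ i ∈ Finset.range (n+1), n.choose i :=
        Finset.single_le_sum (fun i _ => Nat.zero_le _) (Finset.mem_range.mpr (by omega))
    _ = 2 ^ n := Nat.sum_range_choose n
  · rw [Nat.choose_eq_zero_of_lt h]; exact Nat.zero_le _

lemma card_subsets (m d : ℕ) (T : Finset (Fin m)) :
    (Finset.univ.filter (fun a : {s : Finset (Fin m) // s.card = d} =>
        (a : Finset (Fin m)) ⊆ T)).card = T.card.choose d := by
  rw [← Finset.card_powersetCard d T]
  refine Finset.card_bij (i := fun a _ => (a : Finset (Fin m))) ?_ ?_ ?_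
  · intro a ha
    rw [Finset.mem_filter] at ha
    exact Finset.mem_powersetCard.mpr ⟨ha.2, a.2⟩
  · intro a _ b _ hab; exact Subtype.ext hab
  · intro s hs
    rw [Finset.mem_powersetCard] at hs
    exact ⟨⟨s, hs.2⟩, by simp [hs.1], rfl⟩

lemma card_restricted (n m d : ℕ) (S : Finset (Fin n)) (T : Finset (Fin m)) :
    (Finset.univ.filter (fun N : Fin n → {s : Finset (Fin m) // s.card = d} =>
        ∀ f ∈ S, (N f : Finset (Fin m)) ⊆ T)).card
      = (T.card.choose d) ^ S.card * (m.choose d) ^ (n - S.card) := by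
  have hset : Finset.univ.filter (fun N : Fin n → {s : Finset (Fin m) // s.card = d} =>
        ∀ f ∈ S, (N f : Finset (Fin m)) ⊆ T)
      = Fintype.piFinset (fun f => if f ∈ S then
          Finset.univ.filter (fun a : {s : Finset (Fin m) // s.card = d} =>
            (a : Finset (Fin m)) ⊆ T) else Finset.univ) := by
    ext N
    simp only [Finset.mem_filter, Finset.mem_univ, true_and, Fintype.mem_piFinset]
    constructor
    · intro h f
      by_cases hf : f ∈ S
      · simp [hf, h f hf]
      · simp [hf]
    · intro h f hf
      have := h f
      simp only [hf, if_true] at this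
      exact (Finset.mem_filter.mp this).2
  rw [hset, Fintype.card_piFinset]
  have : ∀ f : Fin n, ((if f ∈ S then
          Finset.univ.filter (fun a : {s : Finset (Fin m) // s.card = d} =>
            (a : Finset (Fin m)) ⊆ T) else Finset.univ)).card
      = if f ∈ S then T.card.choose d else m.choose d := by
    intro f
    by_cases hf : f ∈ S
    · simp only [hf, if_true]; exact card_subsets m d T
    · simp only [hf, if_false]
      rw [Finset.card_univ, ← Fintype.card_fin m, Fintype.card_finset_len]
      simp
  rw [Finset.prod_congr rfl (fun f _ => this f), Finset.prod_ite, Finset.prod_const,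
    Finset.prod_const]
  congr 1
  · congr 1
    simp
  · congr 1
    have hc : Finset.univ.filter (fun x => x ∉ S) = Sᶜ := by ext x; simp
    rw [hc, Finset.card_compl, Fintype.card_fin]

/-- Random bipartite digraph: `n` firms each point to a uniformly random set of
`d = ⌈32 ((n+k)/n) log n⌉` distinct workers among `n + k` workers (`0 ≤ k ≤ n`),
independently across firms.  For all sufficiently large `n`, with probability at least
`1 - 1/n²`, every set `S` of firms with `|S| = ⌊n/10⌋` satisfies
`|N(S)| ≥ 0.99 (n + k)`. -/
theorem expander_large_sets :
    ∃ n₀ : ℕ, ∀ n ≥ n₀, ∀ k ≤ n, ∀ d : ℕ,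
      d = ⌈(32 : ℝ) * ((n + k : ℝ) / n) * Real.log n⌉₊ →
      (1 : ℝ) - 1 / (n : ℝ) ^ 2 ≤
        (Nat.card {N : Fin n → {s : Finset (Fin (n + k)) // s.card = d} //
          ∀ S : Finset (Fin n), S.card = n / 10 →
            (0.99 : ℝ) * ((n : ℝ) + k) ≤
              (S.biUnion (fun f => (N f : Finset (Fin (n + k))))).card} : ℝ) /
        (Nat.card (Fin n → {s : Finset (Fin (n + k)) // s.card = d}) : ℝ) := by
  classical
  refine ⟨10 ^ 200, fun n hn k hk d hd => ?_⟩
  set m := n + k with hm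
  have hn1 : (1:ℕ) ≤ n := le_trans (by norm_num) hn
  have hn0R : (0:ℝ) < n := by exact_mod_cast hn1
  have hnbig : ((10:ℝ))^200 ≤ (n:ℝ) := by exact_mod_cast hn
  -- logarithm estimates
  have hlog10 : (2:ℝ) ≤ Real.log 10 := by
    rw [Real.le_log_iff_exp_le (by norm_num)]
    have h2 : Real.exp 2 = Real.exp 1 * Real.exp 1 := by
      rw [← Real.exp_add]; norm_num
    nlinarith [Real.exp_one_lt_d9, Real.exp_pos 1]
  have hlog : (400:ℝ) ≤ Real.log n := by
    have h1 : Real.log ((10:ℝ)^200) ≤ Real.log n := Real.log_le_log (by positivity) hnbig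
    rw [Real.log_pow] at h1
    push_cast at h1
    linarith
  have hlogpos : (0:ℝ) < Real.log n := by linarith
  have hlogle : Real.log n ≤ (n:ℝ) := by
    have := Real.log_le_sub_one_of_pos hn0R; linarith
  have hsqrt_pos : (0:ℝ) < Real.sqrt n := Real.sqrt_pos.mpr hn0R
  have hlogsqrt : Real.log n ≤ 2 * Real.sqrt n := by
    have h1 : Real.log (Real.sqrt n) ≤ Real.sqrt n - 1 :=
      Real.log_le_sub_one_of_pos hsqrt_pos
    have h2 : Real.log (Real.sqrt n) = Real.log n / 2 := Real.log_sqrt hn0R.le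
    linarith
  have h128 : (128:ℝ) ≤ Real.sqrt n := by
    rw [show (128:ℝ) = Real.sqrt (128^2) by rw [Real.sqrt_sq]; norm_num]
    exact Real.sqrt_le_sqrt (by nlinarith)
  have hnm : n ≤ m := by omega
  have hmn : m ≤ 2 * n := by omega
  have hmR : (m:ℝ) = (n:ℝ) + (k:ℝ) := by push_cast [hm]; ring
  have hm0R : (0:ℝ) < m := by
    have : (n:ℝ) ≤ m := by exact_mod_cast hnm
    linarith
  -- bounds on d
  have hratio1 : (1:ℝ) ≤ ((n:ℝ) + k) / n := by
    rw [le_div_iff₀ hn0R]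
    have : (0:ℝ) ≤ k := Nat.cast_nonneg k
    linarith
  have hratio2 : ((n:ℝ) + k) / n ≤ 2 := by
    rw [div_le_iff₀ hn0R]
    have : (k:ℝ) ≤ n := by exact_mod_cast hk
    linarith
  have hdge : (32:ℝ) * Real.log n ≤ (d:ℝ) := by
    rw [hd]
    refine le_trans ?_ (Nat.le_ceil _)
    nlinarith
  have hdle : d ≤ m := by
    rw [hd, Nat.ceil_le]
    have hms : Real.sqrt n * Real.sqrt n = (n:ℝ) := Real.mul_self_sqrt hn0R.le
    have hnmR : (n:ℝ) ≤ (m:ℝ) := by exact_mod_cast hnm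
    calc (32:ℝ) * (((n:ℝ) + k) / n) * Real.log n ≤ 64 * Real.log n := by nlinarith
      _ ≤ 128 * Real.sqrt n := by linarith
      _ ≤ Real.sqrt n * Real.sqrt n := by nlinarith
      _ = (n:ℝ) := hms
      _ ≤ (m:ℝ) := hnmR
  have hchpos : 0 < m.choose d := Nat.choose_pos hdle
  -- the parameters s and t
  set s := n / 10 with hs
  set t := ⌈(0.99:ℝ) * m⌉₊ - 1 with ht
  have hceil1 : 1 ≤ ⌈(0.99:ℝ) * m⌉₊ := Nat.one_le_ceil_iff.mpr (by positivity)
  have htm : t ≤ m := by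
    have : ⌈(0.99:ℝ) * m⌉₊ ≤ m := Nat.ceil_le.mpr (by nlinarith)
    omega
  have htR : (t:ℝ) ≤ 0.99 * m := by
    have h1 : (↑⌈(0.99:ℝ) * m⌉₊:ℝ) < 0.99 * m + 1 := Nat.ceil_lt_add_one (by positivity)
    have h2 : (t:ℝ) = (↑⌈(0.99:ℝ) * m⌉₊:ℝ) - 1 := by
      rw [ht]; push_cast [hceil1]; ring
    linarith
  have hsle : s ≤ n := Nat.div_le_self n 10
  have hsR : (n:ℝ)/20 ≤ (s:ℝ) := by
    have h9 : n ≤ 10 * s + 9 := by omega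
    have h9R : (n:ℝ) ≤ 10 * s + 9 := by exact_mod_cast h9
    nlinarith
  -- counting
  have hcard_sub : ∀ (q : (Fin n → {x : Finset (Fin m) // x.card = d}) → Prop)
      (inst : DecidablePred q),
      Nat.card {N // q N} = (@Finset.filter _ q inst Finset.univ).card := by
    intro q inst
    haveI := inst
    rw [Nat.card_eq_fintype_card, Fintype.card_subtype]
    congr 1
    ext N
    simp
  have hcardα : Fintype.card {x : Finset (Fin m) // x.card = d} = m.choose d := by
    rw [Fintype.card_finset_len, Fintype.card_fin]
  have htot : Nat.card (Fin n → {x : Finset (Fin m) // x.card = d}) = m.choose d ^ n := by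
    rw [Nat.card_eq_fintype_card, Fintype.card_fun, hcardα, Fintype.card_fin]
  set p : (Fin n → {x : Finset (Fin m) // x.card = d}) → Prop := fun N =>
    ∀ S : Finset (Fin n), S.card = s →
      (0.99 : ℝ) * ((n : ℝ) + k) ≤
        ((S.biUnion (fun f => (N f : Finset (Fin m)))).card : ℝ) with hp
  haveI instP : DecidablePred p := fun N => Classical.propDecidable (p N)
  haveI instNP : DecidablePred (fun N => ¬ p N) := fun N => Classical.propDecidable _
  rw [hcard_sub p instP, htot]
  have hsplit : (Finset.univ.filter p).card + (Finset.univ.filter (fun N => ¬ p N)).card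
      = m.choose d ^ n := by
    rw [Finset.card_filter_add_card_filter_not, Finset.card_univ,
      Fintype.card_fun, hcardα, Fintype.card_fin]
  -- bound on the bad set
  have hbad : (Finset.univ.filter (fun N => ¬ p N)).card
      ≤ n.choose s * (m.choose t * ((t.choose d) ^ s * (m.choose d) ^ (n - s))) := by
    have hsub : Finset.univ.filter (fun N => ¬ p N)
        ⊆ (Finset.univ.powersetCard s).biUnion (fun S =>
            (Finset.univ.powersetCard t).biUnion (fun T =>
              Finset.univ.filter (fun N : Fin n → {x : Finset (Fin m) // x.card = d} =>
                ∀ f ∈ S, (N f : Finset (Fin m)) ⊆ T))) := by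
      intro N hN
      rw [Finset.mem_filter] at hN
      obtain ⟨-, hN⟩ := hN
      simp only [hp, not_forall, Classical.not_imp, not_le] at hN
      obtain ⟨S, hScard, hSlt⟩ := hN
      have hcard : (S.biUnion (fun f => (N f : Finset (Fin m)))).card ≤ t := by
        have h1 : ((S.biUnion (fun f => (N f : Finset (Fin m)))).card : ℝ) < 0.99 * m := by
          rw [hmR]; exact hSlt
        have h2 : (S.biUnion (fun f => (N f : Finset (Fin m)))).card < ⌈(0.99:ℝ) * m⌉₊ :=
          Nat.lt_ceil.mpr h1
        omega
      obtain ⟨T, hTsub, hTcard⟩ :=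
        Finset.exists_superset_card_eq hcard (by rw [Fintype.card_fin]; exact htm)
      rw [Finset.mem_biUnion]
      refine ⟨S, Finset.mem_powersetCard.mpr ⟨Finset.subset_univ _, hScard⟩, ?_⟩
      rw [Finset.mem_biUnion]
      refine ⟨T, Finset.mem_powersetCard.mpr ⟨Finset.subset_univ _, hTcard⟩, ?_⟩
      rw [Finset.mem_filter]
      exact ⟨Finset.mem_univ _, fun f hf =>
        (Finset.subset_biUnion_of_mem _ hf).trans hTsub⟩
    calc (Finset.univ.filter (fun N => ¬ p N)).card
        ≤ ((Finset.univ.powersetCard s).biUnion (fun S =>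
            (Finset.univ.powersetCard t).biUnion (fun T =>
              Finset.univ.filter (fun N : Fin n → {x : Finset (Fin m) // x.card = d} =>
                ∀ f ∈ S, (N f : Finset (Fin m)) ⊆ T)))).card := Finset.card_le_card hsub
      _ ≤ ∑ S ∈ Finset.univ.powersetCard s, ∑ T ∈ Finset.univ.powersetCard t,
            (Finset.univ.filter (fun N : Fin n → {x : Finset (Fin m) // x.card = d} =>
                ∀ f ∈ S, (N f : Finset (Fin m)) ⊆ T)).card :=
          le_trans (Finset.card_biUnion_le)
            (Finset.sum_le_sum (fun S _ => Finset.card_biUnion_le))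
      _ = ∑ S ∈ Finset.univ.powersetCard s, ∑ T ∈ Finset.univ.powersetCard t,
            (t.choose d) ^ s * (m.choose d) ^ (n - s) := by
          refine Finset.sum_congr rfl (fun S hS => Finset.sum_congr rfl (fun T hT => ?_))
          rw [Finset.mem_powersetCard] at hS hT
          rw [card_restricted, hT.2, hS.2]
      _ = n.choose s * (m.choose t * ((t.choose d) ^ s * (m.choose d) ^ (n - s))) := by
          rw [Finset.sum_const, Finset.sum_const, Finset.card_powersetCard,
            Finset.card_powersetCard, Finset.card_univ, Finset.card_univ,
            Fintype.card_fin, Fintype.card_fin, smul_eq_mul, smul_eq_mul]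
  -- now the real-number estimates
  have htotposR : (0:ℝ) < ((m.choose d : ℕ):ℝ) ^ n := by
    have : (0:ℝ) < ((m.choose d : ℕ):ℝ) := by exact_mod_cast hchpos
    positivity
  have hn2pos : (0:ℝ) < (n:ℝ)^2 := by positivity
  -- key inequality
  have hkey : ((Finset.univ.filter (fun N => ¬ p N)).card : ℝ)
      ≤ 1 / (n:ℝ)^2 * ((m.choose d : ℕ):ℝ) ^ n := by
    have hchR : (0:ℝ) < ((m.choose d : ℕ):ℝ) := by exact_mod_cast hchpos
    -- step 1 : (t.choose d : ℝ) ≤ 0.99 ^ d * m.choose d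
    have step1 : ((t.choose d : ℕ):ℝ) ≤ (0.99:ℝ) ^ d * ((m.choose d : ℕ):ℝ) := by
      have hnat := choose_ratio_nat t m htm d
      have hnatR : ((t.choose d : ℕ):ℝ) * (m:ℝ)^d ≤ ((m.choose d : ℕ):ℝ) * (t:ℝ)^d := by
        exact_mod_cast hnat
      have hpow : (t:ℝ)^d ≤ ((0.99:ℝ) * m)^d :=
        pow_le_pow_left₀ (Nat.cast_nonneg t) htR d
      have hmpow : (0:ℝ) < (m:ℝ)^d := by positivity
      rw [mul_pow] at hpow
      have : ((t.choose d : ℕ):ℝ) * (m:ℝ)^d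
          ≤ (0.99:ℝ)^d * ((m.choose d : ℕ):ℝ) * (m:ℝ)^d := by
        calc ((t.choose d : ℕ):ℝ) * (m:ℝ)^d ≤ ((m.choose d : ℕ):ℝ) * (t:ℝ)^d := hnatR
          _ ≤ ((m.choose d : ℕ):ℝ) * ((0.99:ℝ)^d * (m:ℝ)^d) := by
              exact mul_le_mul_of_nonneg_left hpow (Nat.cast_nonneg _)
          _ = (0.99:ℝ)^d * ((m.choose d : ℕ):ℝ) * (m:ℝ)^d := by ring
      exact le_of_mul_le_mul_right this hmpow
    -- step 2 : powers
    have step2 : (((t.choose d : ℕ):ℝ)) ^ s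
        ≤ (0.99:ℝ) ^ (d * s) * ((m.choose d : ℕ):ℝ) ^ s := by
      calc (((t.choose d : ℕ):ℝ)) ^ s ≤ ((0.99:ℝ) ^ d * ((m.choose d : ℕ):ℝ)) ^ s :=
            pow_le_pow_left₀ (Nat.cast_nonneg _) step1 s
        _ = (0.99:ℝ) ^ (d * s) * ((m.choose d : ℕ):ℝ) ^ s := by
            rw [mul_pow, ← pow_mul]
    have hbadR : ((Finset.univ.filter (fun N => ¬ p N)).card : ℝ)
        ≤ ((n.choose s : ℕ):ℝ) * (((m.choose t : ℕ):ℝ) *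
            ((((t.choose d : ℕ):ℝ)) ^ s * (((m.choose d : ℕ):ℝ)) ^ (n - s))) := by
      exact_mod_cast hbad
    have hpowsplit : (((m.choose d : ℕ):ℝ)) ^ s * (((m.choose d : ℕ):ℝ)) ^ (n - s)
        = (((m.choose d : ℕ):ℝ)) ^ n := by
      rw [← pow_add]
      congr 1
      omega
    have hns : ((n.choose s : ℕ):ℝ) ≤ 2 ^ n := by
      exact_mod_cast choose_le_two_pow' n s
    have hmt : ((m.choose t : ℕ):ℝ) ≤ 2 ^ (2 * n) := by
      calc ((m.choose t : ℕ):ℝ) ≤ (2:ℝ) ^ m := by exact_mod_cast choose_le_two_pow' m t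
        _ ≤ (2:ℝ) ^ (2 * n) := by
            exact pow_le_pow_right₀ (by norm_num) hmn
    -- the scalar bound
    have hscalar : (2:ℝ) ^ n * (2:ℝ) ^ (2 * n) * (0.99:ℝ) ^ (d * s) ≤ 1 / (n:ℝ)^2 := by
      have he2 : (2:ℝ) ≤ Real.exp 1 := by
        have := Real.add_one_le_exp (1:ℝ); linarith
      have hexp2 : (2:ℝ) ^ n * (2:ℝ) ^ (2 * n) ≤ Real.exp (3 * (n:ℝ)) := by
        have : (2:ℝ) ^ n * (2:ℝ) ^ (2 * n) = (2:ℝ) ^ (3 * n) := by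
          rw [← pow_add]; congr 1; omega
        rw [this]
        calc (2:ℝ) ^ (3 * n) ≤ (Real.exp 1) ^ (3 * n) :=
              pow_le_pow_left₀ (by norm_num) he2 _
          _ = Real.exp ((3 * n : ℕ)) := Real.exp_one_pow _
          _ = Real.exp (3 * (n:ℝ)) := by push_cast; ring_nf
      have h99 : (0.99:ℝ) ≤ Real.exp (-0.01) := by
        have := Real.add_one_le_exp (-0.01 : ℝ); linarith
      have hexp99 : (0.99:ℝ) ^ (d * s) ≤ Real.exp (-(0.01) * ((d:ℝ) * (s:ℝ))) := by
        calc (0.99:ℝ) ^ (d * s) ≤ (Real.exp (-0.01)) ^ (d * s) :=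
              pow_le_pow_left₀ (by norm_num) h99 _
          _ = Real.exp (((d * s : ℕ):ℝ) * (-0.01)) := by
              rw [Real.exp_nat_mul]
          _ = Real.exp (-(0.01) * ((d:ℝ) * (s:ℝ))) := by push_cast; ring_nf
      have hinv : 1 / (n:ℝ)^2 = Real.exp (-(2 * Real.log n)) := by
        rw [Real.exp_neg]
        congr 1
        rw [show (2:ℝ) * Real.log n = Real.log n + Real.log n by ring, Real.exp_add,
          Real.exp_log hn0R]
        ring
      have hds : (32 * Real.log n) * ((n:ℝ)/20) ≤ ((d:ℝ)) * ((s:ℝ)) := by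
        have hd0 : (0:ℝ) ≤ 32 * Real.log n := by positivity
        have hs0 : (0:ℝ) ≤ (n:ℝ)/20 := by positivity
        exact mul_le_mul hdge hsR hs0 (Nat.cast_nonneg d)
      have hdscast : ((d * s : ℕ):ℝ) = (d:ℝ) * (s:ℝ) := by push_cast; ring
      have hexpineq : 3 * (n:ℝ) + 2 * Real.log n ≤ 0.01 * ((d:ℝ) * (s:ℝ)) := by
        have e1 : 3 * (n:ℝ) ≤ 0.008 * (n * Real.log n) := by nlinarith
        have e2 : 2 * Real.log n ≤ 0.008 * (n * Real.log n) := by nlinarith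
        nlinarith
      have final : (2:ℝ) ^ n * (2:ℝ) ^ (2 * n) * (0.99:ℝ) ^ (d * s)
          ≤ Real.exp (3 * (n:ℝ)) * Real.exp (-(0.01) * ((d:ℝ) * (s:ℝ))) :=
        mul_le_mul hexp2 hexp99 (by positivity) (Real.exp_pos _).le
      rw [← Real.exp_add] at final
      have hle : Real.exp (3 * (n:ℝ) + -(0.01) * ((d:ℝ) * (s:ℝ)))
          ≤ Real.exp (-(2 * Real.log n)) :=
        Real.exp_le_exp.mpr (by linarith only [hexpineq])
      rw [hinv]
      linarith only [final, hle]
    calc ((Finset.univ.filter (fun N => ¬ p N)).card : ℝ)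
        ≤ ((n.choose s : ℕ):ℝ) * (((m.choose t : ℕ):ℝ) *
            ((((t.choose d : ℕ):ℝ)) ^ s * (((m.choose d : ℕ):ℝ)) ^ (n - s))) := hbadR
      _ ≤ (2:ℝ)^n * ((2:ℝ)^(2*n) * ((0.99:ℝ) ^ (d * s) * ((m.choose d : ℕ):ℝ) ^ s
            * (((m.choose d : ℕ):ℝ)) ^ (n - s))) := by
          have hC : (0:ℝ) ≤ (((m.choose d : ℕ):ℝ)) ^ (n - s) := by positivity
          exact mul_le_mul hns
            (mul_le_mul hmt (mul_le_mul_of_nonneg_right step2 hC)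
              (by positivity) (by positivity))
            (by positivity) (by positivity)
      _ = ((2:ℝ)^n * (2:ℝ)^(2*n) * (0.99:ℝ) ^ (d * s)) * (((m.choose d : ℕ):ℝ) ^ s
            * (((m.choose d : ℕ):ℝ)) ^ (n - s)) := by ring
      _ = ((2:ℝ)^n * (2:ℝ)^(2*n) * (0.99:ℝ) ^ (d * s)) * ((m.choose d : ℕ):ℝ) ^ n := by
          rw [hpowsplit]
      _ ≤ 1 / (n:ℝ)^2 * ((m.choose d : ℕ):ℝ) ^ n := by
          exact mul_le_mul_of_nonneg_right hscalar (by positivity)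
  -- finish
  have hgoodR : ((Finset.univ.filter p).card : ℝ)
      = ((m.choose d : ℕ):ℝ) ^ n - ((Finset.univ.filter (fun N => ¬ p N)).card : ℝ) := by
    have hcast := congrArg (Nat.cast (R := ℝ)) hsplit
    push_cast at hcast
    linarith only [hcast]
  have htotR : ((m.choose d ^ n : ℕ):ℝ) = ((m.choose d : ℕ):ℝ) ^ n := by push_cast; ring
  rw [htotR, hgoodR, sub_div, div_self (ne_of_gt htotposR)]
  have hbound : ((Finset.univ.filter (fun N => ¬ p N)).card : ℝ) / ((m.choose d : ℕ):ℝ) ^ n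
      ≤ 1 / (n:ℝ)^2 := by
    rw [div_le_iff₀ htotposR]
    linarith only [hkey]
  linarith only [hbound]
end

section
/- In a random bipartite digraph with n firms and n + k workers (0 ≤ k ≤ n), each firm pointing to d = ⌈32·((n+k)/n)·log n⌉ uniformly random distinct workers independently, with probability at least 1 − 1/n, for every set of workers T with |T| < n/10, the number of firms f with N(f) ∩ T ≠ ∅ is at least 2|T|. -/
open Finset


-- descFactorial ratio lemma
lemma dF_ratio (M d : ℕ) : ∀ t : ℕ,
    (M - d).descFactorial t * M ^ t ≤ M.descFactorial t * (M - d) ^ t := by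
  intro t
  induction t with
  | zero => simp
  | succ t ih =>
    rw [Nat.descFactorial_succ, Nat.descFactorial_succ, pow_succ, pow_succ]
    have key : (M - d - t) * M ≤ (M - t) * (M - d) := by
      rcases Nat.le_total M (d + t) with h | h
      · have : M - d - t = 0 := by omega
        simp [this]
      · obtain ⟨e, he⟩ : ∃ e, M = d + t + e := ⟨M - d - t, by omega⟩
        subst he
        have h1 : d + t + e - d - t = e := by omega
        have h2 : d + t + e - t = d + e := by omega
        have h3 : d + t + e - d = t + e := by omega
        rw [h1, h2, h3]
        nlinarith
    calc (M - d - t) * ((M - d).descFactorial t) * (M ^ t * M)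
        = ((M - d - t) * M) * ((M - d).descFactorial t * M ^ t) := by ring
      _ ≤ ((M - t) * (M - d)) * (M.descFactorial t * (M - d) ^ t) :=
          Nat.mul_le_mul key ih
      _ = (M - t) * M.descFactorial t * ((M - d) ^ t * (M - d)) := by ring

-- choose ratio lemma
lemma choose_ratio {M d t : ℕ} (h : t + d ≤ M) :
    (M - t).choose d * M ^ t ≤ M.choose d * (M - d) ^ t := by
  have h1 : M.choose (t + d) * (t + d).choose t = M.choose t * (M - t).choose d := by
    have := Nat.choose_mul (n := M) (k := t + d) (s := t) (Nat.le_add_right _ _)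
    simpa [Nat.add_sub_cancel_left] using this
  have h2 : M.choose (t + d) * (t + d).choose d = M.choose d * (M - d).choose t := by
    have := Nat.choose_mul (n := M) (k := t + d) (s := d) (Nat.le_add_left _ _)
    simpa [Nat.add_sub_cancel] using this
  have h3 : (t + d).choose t = (t + d).choose d := Nat.choose_symm_of_eq_add rfl
  have hid : M.choose t * (M - t).choose d = M.choose d * (M - d).choose t := by
    rw [← h1, h3, h2]
  -- descFactorial-based bound
  have hdf : (M - d).choose t * M ^ t ≤ M.choose t * (M - d) ^ t := by
    have := dF_ratio M d t
    rw [Nat.descFactorial_eq_factorial_mul_choose, Nat.descFactorial_eq_factorial_mul_choose]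
      at this
    have ht : 0 < t.factorial := Nat.factorial_pos t
    calc (M - d).choose t * M ^ t
        = ((M - d).choose t * M ^ t) := rfl
      _ ≤ M.choose t * (M - d) ^ t := by
          have := this
          rw [mul_assoc, mul_assoc] at this
          exact Nat.le_of_mul_le_mul_left this ht
  have hct : 0 < M.choose t := Nat.choose_pos (by omega)
  have : M.choose t * ((M - t).choose d * M ^ t) ≤ M.choose t * (M.choose d * (M - d) ^ t) := by
    calc M.choose t * ((M - t).choose d * M ^ t)
        = (M.choose t * (M - t).choose d) * M ^ t := by ring
      _ = (M.choose d * (M - d).choose t) * M ^ t := by rw [hid]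
      _ = M.choose d * ((M - d).choose t * M ^ t) := by ring
      _ ≤ M.choose d * (M.choose t * (M - d) ^ t) := Nat.mul_le_mul_left _ hdf
      _ = M.choose t * (M.choose d * (M - d) ^ t) := by ring
  exact Nat.le_of_mul_le_mul_left this hct


abbrev WS (n k d : ℕ) := {s : Finset (Fin (n + k)) // s.card = d}

lemma card_avoid (n k d : ℕ) (T : Finset (Fin (n + k))) :
    (univ.filter (fun s : WS n k d => ∀ w ∈ T, w ∉ s.1)).card
      = (n + k - T.card).choose d := by
  have h1 : (powersetCard d Tᶜ).card = (n + k - T.card).choose d := by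
    rw [card_powersetCard, card_compl, Fintype.card_fin]
  rw [← h1]
  apply Finset.card_bij (fun (s : WS n k d) _ => s.1)
  · intro a ha
    rw [mem_powersetCard]
    refine ⟨fun w hw => ?_, a.2⟩
    simp only [mem_filter, mem_univ, true_and] at ha
    rw [Finset.mem_compl]
    intro hwT
    exact ha w hwT hw
  · intro a _ b _ h
    exact Subtype.ext h
  · intro b hb
    rw [mem_powersetCard] at hb
    refine ⟨⟨b, hb.2⟩, ?_, rfl⟩
    simp only [mem_filter, mem_univ, true_and]
    intro w hwT hwb
    exact absurd (hb.1 hwb) (by simpa using hwT)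

lemma card_A (n k d : ℕ) (T : Finset (Fin (n + k))) (Fs : Finset (Fin n)) :
    (univ.filter (fun N : Fin n → WS n k d => ∀ f ∈ Fs, ∀ w ∈ T, w ∉ (N f).1)).card
      = ((n + k - T.card).choose d) ^ Fs.card * ((n + k).choose d) ^ (n - Fs.card) := by
  classical
  have hset : (univ.filter (fun N : Fin n → WS n k d => ∀ f ∈ Fs, ∀ w ∈ T, w ∉ (N f).1))
      = Fintype.piFinset (fun f : Fin n =>
          if f ∈ Fs then (univ.filter (fun s : WS n k d => ∀ w ∈ T, w ∉ s.1)) else univ) := by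
    ext N
    simp only [mem_filter, mem_univ, true_and, Fintype.mem_piFinset]
    constructor
    · intro h f
      by_cases hf : f ∈ Fs
      · simp only [if_pos hf, mem_filter, mem_univ, true_and]
        exact h f hf
      · simp [if_neg hf]
    · intro h f hf
      have := h f
      simp only [if_pos hf, mem_filter, mem_univ, true_and] at this
      exact this
  rw [hset, Fintype.card_piFinset]
  rw [← Finset.prod_mul_prod_compl Fs]
  have e1 : ∀ f ∈ Fs, (if f ∈ Fs then (univ.filter (fun s : WS n k d => ∀ w ∈ T, w ∉ s.1))
      else univ).card = (n + k - T.card).choose d := by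
    intro f hf; rw [if_pos hf, card_avoid]
  have e2 : ∀ f ∈ Fsᶜ, (if f ∈ Fs then (univ.filter (fun s : WS n k d => ∀ w ∈ T, w ∉ s.1))
      else (univ : Finset (WS n k d))).card = (n + k).choose d := by
    intro f hf
    rw [if_neg (by simpa using hf), card_univ, Nat.card_eq_fintype_card.symm]
    rw [Nat.card_eq_fintype_card, Fintype.card_finset_len, Fintype.card_fin]
  rw [Finset.prod_congr rfl e1, Finset.prod_congr rfl e2, Finset.prod_const, Finset.prod_const,
    Finset.card_compl, Fintype.card_fin]


lemma card_total (n k d : ℕ) :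
    Nat.card (Fin n → WS n k d) = ((n + k).choose d) ^ n := by
  rw [Nat.card_eq_fintype_card, Fintype.card_fun, Fintype.card_finset_len, Fintype.card_fin,
    Fintype.card_fin]

set_option maxHeartbeats 2000000 in
/-- Random bipartite digraph with `n` firms and `n + k` workers (`0 ≤ k ≤ n`); each firm
points to `d = ⌈32 ((n+k)/n) log n⌉` uniformly random distinct workers, independently
across firms.  For all sufficiently large `n`, with probability at least `1 - 1/n`, for
every set of workers `T` with `|T| < n/10`, the number of firms pointing into `T` is at
least `2 |T|`. -/
theorem many_firms_point_to_small_worker_sets :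
    ∃ n₀ : ℕ, ∀ n ≥ n₀, ∀ k ≤ n, ∀ d : ℕ,
      d = ⌈(32 : ℝ) * ((n + k : ℝ) / n) * Real.log n⌉₊ →
      (1 : ℝ) - 1 / (n : ℝ) ≤
        (Nat.card {N : Fin n → {s : Finset (Fin (n + k)) // s.card = d} //
          ∀ T : Finset (Fin (n + k)), (T.card : ℝ) < (n : ℝ) / 10 →
            2 * T.card ≤
              Nat.card {f : Fin n // ∃ w ∈ T, w ∈ (N f : Finset (Fin (n + k)))}} : ℝ) /
        (Nat.card (Fin n → {s : Finset (Fin (n + k)) // s.card = d}) : ℝ) := by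
  refine ⟨1000000, fun n hn k hk d hd => ?_⟩
  classical
  have hn0 : 0 < n := by omega
  set P : (Fin n → WS n k d) → Prop := fun N =>
    ∀ T : Finset (Fin (n + k)), (T.card : ℝ) < (n : ℝ) / 10 →
      2 * T.card ≤ Nat.card {f : Fin n // ∃ w ∈ T, w ∈ (N f).1} with hP
  set C := (n + k).choose d with hC
  set m : ℕ → ℕ := fun t => (n + k - t).choose d with hm
  set bad : Finset (Fin n → WS n k d) := univ.filter (fun N => ¬ P N) with hbad
  -- cover
  have hcover : bad ⊆ (Icc 1 (n / 10)).biUnion (fun t =>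
      ((univ : Finset (Finset (Fin (n + k)))).filter (fun T => T.card = t)).biUnion (fun T =>
        ((univ : Finset (Finset (Fin n))).filter (fun Fs => Fs.card = n + 1 - 2 * t)).biUnion
          (fun Fs => univ.filter (fun N : Fin n → WS n k d =>
            ∀ f ∈ Fs, ∀ w ∈ T, w ∉ (N f).1)))) := by
    intro N hN
    rw [hbad, mem_filter] at hN
    have hNP : ¬ P N := hN.2
    simp only [hP, not_forall, not_le] at hNP
    obtain ⟨T, hT1, hT2⟩ := hNP
    have hhit : Nat.card {f : Fin n // ∃ w ∈ T, w ∈ (N f).1}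
        = (univ.filter (fun f : Fin n => ∃ w ∈ T, w ∈ (N f).1)).card := by
      rw [Nat.card_eq_fintype_card, Fintype.card_subtype]
    rw [hhit] at hT2
    set t := T.card with ht
    have ht1 : 1 ≤ t := by
      by_contra h
      have : t = 0 := by omega
      rw [this] at hT2; omega
    have h10 : 10 * t < n := by
      have : ((10 * t : ℕ) : ℝ) < (n : ℝ) := by push_cast; linarith
      exact_mod_cast this
    have hsum : (univ.filter (fun f : Fin n => ∃ w ∈ T, w ∈ (N f).1)).card
        + (univ.filter (fun f : Fin n => ¬ ∃ w ∈ T, w ∈ (N f).1)).card = n := by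
      rw [Finset.card_filter_add_card_filter_not, card_univ, Fintype.card_fin]
    have hmiss : n + 1 - 2 * t ≤ (univ.filter (fun f : Fin n => ¬ ∃ w ∈ T, w ∈ (N f).1)).card := by
      omega
    obtain ⟨Fs, hFsub, hFcard⟩ := Finset.exists_subset_card_eq hmiss
    refine mem_biUnion.2 ⟨t, ?_, mem_biUnion.2 ⟨T, by simp [ht], mem_biUnion.2 ⟨Fs, ?_, ?_⟩⟩⟩
    · rw [mem_Icc]
      exact ⟨ht1, (Nat.le_div_iff_mul_le (by norm_num)).2 (by omega)⟩
    · simp [hFcard]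
    · rw [mem_filter]
      refine ⟨mem_univ _, fun f hf w hw hwN => ?_⟩
      have := hFsub hf
      rw [mem_filter] at this
      exact this.2 ⟨w, hw, hwN⟩
  -- counting bound
  have hcount : ∀ t ∈ Icc 1 (n / 10),
      (((univ : Finset (Finset (Fin (n + k)))).filter (fun T => T.card = t)).biUnion (fun T =>
        ((univ : Finset (Finset (Fin n))).filter (fun Fs => Fs.card = n + 1 - 2 * t)).biUnion
          (fun Fs => univ.filter (fun N : Fin n → WS n k d =>
            ∀ f ∈ Fs, ∀ w ∈ T, w ∉ (N f).1)))).card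
      ≤ (n + k).choose t * ((n.choose (n + 1 - 2 * t)) * (m t ^ (n + 1 - 2 * t) * C ^ (2 * t - 1))) := by
    intro t htmem
    rw [mem_Icc] at htmem
    have h10 : 10 * t ≤ n := by
      have := (Nat.le_div_iff_mul_le (show 0 < 10 by norm_num)).1 htmem.2; omega
    have hFscard : ((univ : Finset (Finset (Fin n))).filter
        (fun Fs => Fs.card = n + 1 - 2 * t)).card = n.choose (n + 1 - 2 * t) := by
      rw [← Fintype.card_subtype, Fintype.card_finset_len, Fintype.card_fin]
    have hTscard : ((univ : Finset (Finset (Fin (n + k)))).filter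
        (fun T => T.card = t)).card = (n + k).choose t := by
      rw [← Fintype.card_subtype, Fintype.card_finset_len, Fintype.card_fin]
    calc (((univ : Finset (Finset (Fin (n + k)))).filter (fun T => T.card = t)).biUnion (fun T =>
        ((univ : Finset (Finset (Fin n))).filter (fun Fs => Fs.card = n + 1 - 2 * t)).biUnion
          (fun Fs => univ.filter (fun N : Fin n → WS n k d =>
            ∀ f ∈ Fs, ∀ w ∈ T, w ∉ (N f).1)))).card
        ≤ ∑ T ∈ ((univ : Finset (Finset (Fin (n + k)))).filter (fun T => T.card = t)),
            (((univ : Finset (Finset (Fin n))).filter (fun Fs => Fs.card = n + 1 - 2 * t)).biUnion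
              (fun Fs => univ.filter (fun N : Fin n → WS n k d =>
                ∀ f ∈ Fs, ∀ w ∈ T, w ∉ (N f).1))).card := Finset.card_biUnion_le
      _ ≤ ∑ _T ∈ ((univ : Finset (Finset (Fin (n + k)))).filter (fun T => T.card = t)),
            ((n.choose (n + 1 - 2 * t)) * (m t ^ (n + 1 - 2 * t) * C ^ (2 * t - 1))) := by
          apply Finset.sum_le_sum
          intro T hT
          rw [mem_filter] at hT
          calc (((univ : Finset (Finset (Fin n))).filter (fun Fs => Fs.card = n + 1 - 2 * t)).biUnion
              (fun Fs => univ.filter (fun N : Fin n → WS n k d =>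
                ∀ f ∈ Fs, ∀ w ∈ T, w ∉ (N f).1))).card
              ≤ ∑ Fs ∈ ((univ : Finset (Finset (Fin n))).filter (fun Fs => Fs.card = n + 1 - 2 * t)),
                  (univ.filter (fun N : Fin n → WS n k d =>
                    ∀ f ∈ Fs, ∀ w ∈ T, w ∉ (N f).1)).card := Finset.card_biUnion_le
            _ = ∑ _Fs ∈ ((univ : Finset (Finset (Fin n))).filter (fun Fs => Fs.card = n + 1 - 2 * t)),
                  (m t ^ (n + 1 - 2 * t) * C ^ (2 * t - 1)) := by
                apply Finset.sum_congr rfl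
                intro Fs hFs
                rw [mem_filter] at hFs
                rw [card_A, hT.2, hFs.2, hm, hC]
                congr 1
                congr 1
                omega
            _ = (n.choose (n + 1 - 2 * t)) * (m t ^ (n + 1 - 2 * t) * C ^ (2 * t - 1)) := by
                rw [Finset.sum_const, hFscard, smul_eq_mul]
      _ = (n + k).choose t * ((n.choose (n + 1 - 2 * t)) * (m t ^ (n + 1 - 2 * t) * C ^ (2 * t - 1))) := by
          rw [Finset.sum_const, hTscard, smul_eq_mul]
  have hbadsum : bad.card ≤ ∑ t ∈ Icc 1 (n / 10),
      (n + k).choose t * ((n.choose (n + 1 - 2 * t)) * (m t ^ (n + 1 - 2 * t) * C ^ (2 * t - 1))) :=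
    le_trans (Finset.card_le_card hcover)
      (le_trans Finset.card_biUnion_le (Finset.sum_le_sum hcount))
  -- analytic facts
  have hnR6 : (1000000 : ℝ) ≤ (n : ℝ) := by exact_mod_cast hn
  have hnRpos : (0 : ℝ) < (n : ℝ) := by positivity
  have hlog0 : 0 ≤ Real.log n := Real.log_nonneg (by linarith)
  have hkR : (k : ℝ) ≤ (n : ℝ) := by exact_mod_cast hk
  have hd_low : 32 * (((n : ℝ) + k) / n) * Real.log n ≤ (d : ℝ) := by rw [hd]; exact Nat.le_ceil _
  have hd_up : (d : ℝ) < 64 * Real.log n + 1 := by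
    have h2 : (32 : ℝ) * (((n : ℝ) + k) / n) * Real.log n ≤ 64 * Real.log n := by
      have hfrac : ((n : ℝ) + k) / n ≤ 2 := by
        rw [div_le_iff₀ hnRpos]; linarith
      nlinarith [hlog0, hfrac]
    have h3 : d ≤ ⌈(64 : ℝ) * Real.log n⌉₊ := by rw [hd]; exact Nat.ceil_le_ceil h2
    have h4 : ((⌈(64 : ℝ) * Real.log n⌉₊ : ℕ) : ℝ) < 64 * Real.log n + 1 :=
      Nat.ceil_lt_add_one (by positivity)
    calc (d : ℝ) ≤ (⌈(64 : ℝ) * Real.log n⌉₊ : ℝ) := by exact_mod_cast h3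
      _ < 64 * Real.log n + 1 := h4
  have hsqrt : (1000 : ℝ) ≤ Real.sqrt n := by
    rw [Real.le_sqrt (by norm_num) (by positivity)]
    nlinarith
  have hlogn_sqrt : Real.log n ≤ 2 * Real.sqrt n := by
    have h1 : Real.log (Real.sqrt n) ≤ Real.sqrt n - 1 :=
      Real.log_le_sub_one_of_pos (by nlinarith)
    have h2 : Real.log (Real.sqrt n) = Real.log n / 2 := Real.log_sqrt (by positivity)
    linarith
  have hs : Real.sqrt n * Real.sqrt n = (n : ℝ) := Real.mul_self_sqrt (by positivity)
  have hd_n5 : (d : ℝ) < (n : ℝ) / 5 := by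
    have h1 : (128 : ℝ) * Real.sqrt n ≤ 0.128 * n := by nlinarith [hsqrt]
    nlinarith [hd_up, hlogn_sqrt, hnR6]
  have hdnat : 5 * d < n := by
    have : ((5 * d : ℕ) : ℝ) < (n : ℝ) := by push_cast; linarith
    exact_mod_cast this
  have hdM : d ≤ n + k := by omega
  have hCpos : 0 < C := by rw [hC]; exact Nat.choose_pos (by omega)
  have hMpos : (0 : ℝ) < ((n + k : ℕ) : ℝ) := by
    have : 0 < n + k := by omega
    exact_mod_cast this
  -- per-term real bound
  have hterm : ∀ t ∈ Icc 1 (n / 10),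
      (((n + k).choose t * ((n.choose (n + 1 - 2 * t)) *
          (m t ^ (n + 1 - 2 * t) * C ^ (2 * t - 1))) : ℕ) : ℝ)
        ≤ (C : ℝ) ^ n / (n : ℝ) ^ 3 := by
    intro t htmem
    rw [mem_Icc] at htmem
    have ht1 : 1 ≤ t := htmem.1
    have h10 : 10 * t ≤ n := by
      have := (Nat.le_div_iff_mul_le (show 0 < 10 by norm_num)).1 htmem.2; omega
    have hen : (n + 1 - 2 * t) + (2 * t - 1) = n := by omega
    have htd : t + d ≤ n + k := by omega
    set e := n + 1 - 2 * t with he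
    set ρ : ℝ := (((n + k : ℕ) : ℝ) - d) / ((n + k : ℕ) : ℝ) with hρ
    have hdMR : (d : ℝ) ≤ ((n + k : ℕ) : ℝ) := by exact_mod_cast hdM
    have hρ0 : 0 ≤ ρ := div_nonneg (by linarith) (by linarith)
    have hρe : ρ ≤ Real.exp (-((d : ℝ) / ((n + k : ℕ) : ℝ))) := by
      have h1 := Real.add_one_le_exp (-((d : ℝ) / ((n + k : ℕ) : ℝ)))
      have h2 : ρ = -((d : ℝ) / ((n + k : ℕ) : ℝ)) + 1 := by
        rw [hρ]; field_simp; ring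
      linarith
    have hratio : (m t : ℝ) ≤ (C : ℝ) * ρ ^ t := by
      have hnat := choose_ratio (M := n + k) (d := d) (t := t) htd
      have hcast : ((n + k - t).choose d : ℝ) * ((n + k : ℕ) : ℝ) ^ t
          ≤ (C : ℝ) * (((n + k : ℕ) : ℝ) - (d : ℝ)) ^ t := by
        have h2 := (Nat.cast_le (α := ℝ)).2 hnat
        push_cast [Nat.cast_sub hdM] at h2
        rw [hC]; push_cast
        convert h2 using 2
      have hMt : (0 : ℝ) < ((n + k : ℕ) : ℝ) ^ t := by positivity
      rw [hρ, div_pow, mul_div_assoc', le_div_iff₀ hMt]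
      exact hcast
    have hme : (m t : ℝ) ^ e ≤ (C : ℝ) ^ e * ρ ^ (t * e) := by
      calc (m t : ℝ) ^ e ≤ ((C : ℝ) * ρ ^ t) ^ e :=
            pow_le_pow_left₀ (by positivity) hratio e
        _ = (C : ℝ) ^ e * ρ ^ (t * e) := by rw [mul_pow, ← pow_mul]
    have hdM_low : 32 * Real.log n / (n : ℝ) ≤ (d : ℝ) / ((n + k : ℕ) : ℝ) := by
      rw [div_le_div_iff₀ hnRpos hMpos]
      calc 32 * Real.log n * ((n + k : ℕ) : ℝ)
          = (32 * (((n : ℝ) + k) / n) * Real.log n) * n := by push_cast; field_simp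
        _ ≤ (d : ℝ) * n := mul_le_mul_of_nonneg_right hd_low hnRpos.le
    have heR : (4 : ℝ) * n / 5 ≤ (e : ℝ) := by
      have h1 : (e : ℝ) = (n : ℝ) + 1 - 2 * t := by
        rw [he]; push_cast [Nat.cast_sub (show 2 * t ≤ n + 1 by omega)]; ring
      have h2 : (10 * t : ℝ) ≤ (n : ℝ) := by exact_mod_cast h10
      linarith
    have ht1R : (1 : ℝ) ≤ (t : ℝ) := by exact_mod_cast ht1
    have hkey : ((4 * t + 3 : ℕ) : ℝ) * Real.log n
        ≤ ((t * e : ℕ) : ℝ) * ((d : ℝ) / ((n + k : ℕ) : ℝ)) := by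
      have a1 : (t : ℝ) * (4 * n / 5) ≤ (t : ℝ) * (e : ℝ) :=
        mul_le_mul_of_nonneg_left heR (by positivity)
      have h1 : (t : ℝ) * (4 * n / 5) * (32 * Real.log n / n)
          ≤ (t : ℝ) * (e : ℝ) * ((d : ℝ) / ((n + k : ℕ) : ℝ)) :=
        mul_le_mul a1 hdM_low (by positivity) (by positivity)
      have h2 : (t : ℝ) * (4 * (n : ℝ) / 5) * (32 * Real.log n / n)
          = (128 / 5) * (t : ℝ) * Real.log n := by field_simp; ring
      have h3 : ((4 * t + 3 : ℕ) : ℝ) * Real.log n ≤ (128 / 5) * (t : ℝ) * Real.log n := by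
        have h4 : ((4 * t + 3 : ℕ) : ℝ) ≤ 128 / 5 * (t : ℝ) := by push_cast; linarith
        exact mul_le_mul_of_nonneg_right h4 hlog0
      push_cast at h1 h3 ⊢
      linarith
    have hB1 : ((n + k).choose t : ℝ) ≤ (n : ℝ) ^ (2 * t) := by
      calc ((n + k).choose t : ℝ) ≤ ((n + k : ℕ) : ℝ) ^ t := by
            exact_mod_cast Nat.choose_le_pow (n + k) t
        _ ≤ ((n : ℝ) ^ 2) ^ t := pow_le_pow_left₀ (by positivity) (by push_cast; nlinarith) t
        _ = (n : ℝ) ^ (2 * t) := by rw [← pow_mul, mul_comm]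
    have hB2 : (n.choose e : ℝ) ≤ (n : ℝ) ^ (2 * t) := by
      have hsym : n.choose e = n.choose (2 * t - 1) := by
        rw [show e = n - (2 * t - 1) by omega]
        exact Nat.choose_symm (by omega)
      calc (n.choose e : ℝ) = (n.choose (2 * t - 1) : ℝ) := by rw [hsym]
        _ ≤ (n : ℝ) ^ (2 * t - 1) := by exact_mod_cast Nat.choose_le_pow n (2 * t - 1)
        _ ≤ (n : ℝ) ^ (2 * t) := pow_le_pow_right₀ (by linarith) (by omega)
    rw [le_div_iff₀ (by positivity : (0 : ℝ) < (n : ℝ) ^ 3)]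
    have hCn : (C : ℝ) ^ n = (C : ℝ) ^ e * (C : ℝ) ^ (2 * t - 1) := by rw [← pow_add, hen]
    have hρpow : ρ ^ (t * e) ≤ Real.exp (-(((t * e : ℕ) : ℝ) * ((d : ℝ) / ((n + k : ℕ) : ℝ)))) := by
      calc ρ ^ (t * e) ≤ (Real.exp (-((d : ℝ) / ((n + k : ℕ) : ℝ)))) ^ (t * e) :=
            pow_le_pow_left₀ hρ0 hρe _
        _ = Real.exp (((t * e : ℕ) : ℝ) * (-((d : ℝ) / ((n + k : ℕ) : ℝ)))) :=
            (Real.exp_nat_mul _ _).symm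
        _ = Real.exp (-(((t * e : ℕ) : ℝ) * ((d : ℝ) / ((n + k : ℕ) : ℝ)))) := by ring_nf
    have hnpow : (n : ℝ) ^ (2 * t) * (n : ℝ) ^ (2 * t) * (n : ℝ) ^ 3
        = Real.exp (((4 * t + 3 : ℕ) : ℝ) * Real.log n) := by
      calc (n : ℝ) ^ (2 * t) * (n : ℝ) ^ (2 * t) * (n : ℝ) ^ 3
          = (n : ℝ) ^ (4 * t + 3) := by rw [← pow_add, ← pow_add]; congr 1; omega
        _ = (Real.exp (Real.log n)) ^ (4 * t + 3) := by rw [Real.exp_log hnRpos]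
        _ = Real.exp (((4 * t + 3 : ℕ) : ℝ) * Real.log n) := by rw [← Real.exp_nat_mul]
    have hsmall : (n : ℝ) ^ (2 * t) * (n : ℝ) ^ (2 * t) * (n : ℝ) ^ 3 * ρ ^ (t * e) ≤ 1 := by
      calc (n : ℝ) ^ (2 * t) * (n : ℝ) ^ (2 * t) * (n : ℝ) ^ 3 * ρ ^ (t * e)
          ≤ Real.exp (((4 * t + 3 : ℕ) : ℝ) * Real.log n) *
              Real.exp (-(((t * e : ℕ) : ℝ) * ((d : ℝ) / ((n + k : ℕ) : ℝ)))) := by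
            rw [hnpow]
            exact mul_le_mul_of_nonneg_left hρpow (by positivity)
        _ = Real.exp (((4 * t + 3 : ℕ) : ℝ) * Real.log n
              - ((t * e : ℕ) : ℝ) * ((d : ℝ) / ((n + k : ℕ) : ℝ))) := by
            rw [← Real.exp_add]; ring_nf
        _ ≤ 1 := Real.exp_le_one_iff.2 (by linarith)
    calc (((n + k).choose t * ((n.choose e) * (m t ^ e * C ^ (2 * t - 1))) : ℕ) : ℝ) * (n : ℝ) ^ 3
        = ((n + k).choose t : ℝ) * ((n.choose e : ℝ) * ((m t : ℝ) ^ e * (C : ℝ) ^ (2 * t - 1)))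
            * (n : ℝ) ^ 3 := by push_cast; ring
      _ ≤ (n : ℝ) ^ (2 * t) * ((n : ℝ) ^ (2 * t) *
            (((C : ℝ) ^ e * ρ ^ (t * e)) * (C : ℝ) ^ (2 * t - 1))) * (n : ℝ) ^ 3 := by
          gcongr <;> positivity
      _ = ((C : ℝ) ^ e * (C : ℝ) ^ (2 * t - 1)) *
            ((n : ℝ) ^ (2 * t) * (n : ℝ) ^ (2 * t) * (n : ℝ) ^ 3 * ρ ^ (t * e)) := by ring
      _ ≤ ((C : ℝ) ^ e * (C : ℝ) ^ (2 * t - 1)) * 1 :=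
          mul_le_mul_of_nonneg_left hsmall (by positivity)
      _ = (C : ℝ) ^ n := by rw [mul_one, ← hCn]
  -- sum bound
  have hsum_le : ((bad.card : ℕ) : ℝ) ≤ (C : ℝ) ^ n / (n : ℝ) ^ 2 := by
    have c1 : ((bad.card : ℕ) : ℝ) ≤ ∑ t ∈ Icc 1 (n / 10),
        (((n + k).choose t * ((n.choose (n + 1 - 2 * t)) *
          (m t ^ (n + 1 - 2 * t) * C ^ (2 * t - 1))) : ℕ) : ℝ) := by
      rw [← Nat.cast_sum]
      exact_mod_cast hbadsum
    have c2 : ∑ t ∈ Icc 1 (n / 10),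
        (((n + k).choose t * ((n.choose (n + 1 - 2 * t)) *
          (m t ^ (n + 1 - 2 * t) * C ^ (2 * t - 1))) : ℕ) : ℝ)
        ≤ ∑ _t ∈ Icc 1 (n / 10), (C : ℝ) ^ n / (n : ℝ) ^ 3 :=
      Finset.sum_le_sum hterm
    have c3 : ∑ _t ∈ Icc 1 (n / 10), (C : ℝ) ^ n / (n : ℝ) ^ 3
        = ((Icc 1 (n / 10)).card : ℝ) * ((C : ℝ) ^ n / (n : ℝ) ^ 3) := by
      rw [Finset.sum_const, nsmul_eq_mul]
    have c4 : ((Icc 1 (n / 10)).card : ℝ) ≤ (n : ℝ) := by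
      have : (Icc 1 (n / 10)).card ≤ n := by
        rw [Nat.card_Icc]; omega
      exact_mod_cast this
    have c5 : ((Icc 1 (n / 10)).card : ℝ) * ((C : ℝ) ^ n / (n : ℝ) ^ 3)
        ≤ (n : ℝ) * ((C : ℝ) ^ n / (n : ℝ) ^ 3) :=
      mul_le_mul_of_nonneg_right c4 (by positivity)
    have c6 : (n : ℝ) * ((C : ℝ) ^ n / (n : ℝ) ^ 3) = (C : ℝ) ^ n / (n : ℝ) ^ 2 := by
      field_simp
    linarith
  -- conclusion
  have hFC : Fintype.card (Fin n → WS n k d) = C ^ n := by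
    rw [← Nat.card_eq_fintype_card, card_total, hC]
  have hsplit : (univ.filter P).card + bad.card = C ^ n := by
    rw [hbad, Finset.card_filter_add_card_filter_not, card_univ, hFC]
  have hgoal1 : Nat.card {N : Fin n → WS n k d // P N} = (univ.filter P).card := by
    rw [Nat.card_eq_fintype_card, Fintype.card_subtype]
  have hgoal2 : Nat.card (Fin n → WS n k d) = C ^ n := by
    rw [card_total, hC]
  rw [hgoal1, hgoal2]
  have hCnpos : (0 : ℝ) < ((C ^ n : ℕ) : ℝ) := by
    have : 0 < C ^ n := Nat.pow_pos hCpos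
    exact_mod_cast this
  have hXeq : ((C ^ n : ℕ) : ℝ) = (C : ℝ) ^ n := by push_cast; ring
  have hfil : ((univ.filter P).card : ℝ) = ((C ^ n : ℕ) : ℝ) - (bad.card : ℝ) := by
    have h := congrArg (Nat.cast : ℕ → ℝ) hsplit
    push_cast at h
    push_cast
    linarith
  rw [hfil, hXeq]
  rw [le_div_iff₀ (hXeq ▸ hCnpos)]
  have hb2 : (bad.card : ℝ) * (n : ℝ) ≤ (C : ℝ) ^ n := by
    have h1 : (bad.card : ℝ) * (n : ℝ) ^ 2 ≤ (C : ℝ) ^ n := by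
      rw [← le_div_iff₀ (by positivity : (0 : ℝ) < (n : ℝ) ^ 2)]
      exact hsum_le
    nlinarith [Nat.cast_nonneg (α := ℝ) bad.card, hnR6]
  have hXn : (0 : ℝ) < (C : ℝ) ^ n := hXeq ▸ hCnpos
  have hinv : (1 - 1 / (n : ℝ)) * (C : ℝ) ^ n = (C : ℝ) ^ n - (C : ℝ) ^ n / n := by
    field_simp
  rw [hinv]
  have : (bad.card : ℝ) ≤ (C : ℝ) ^ n / n := by
    rw [le_div_iff₀ hnRpos]
    exact hb2
  linarith
end

section
/- For all integers n ≥ 2 and all integers m with 1 ≤ m < n/10, the inequality C(2n, 4m)² · (2m/n)^{32 m log n} ≤ 1/n³ holds, where C denotes the binomial coefficient and log is the natural logarithm, provided n is sufficiently large. -/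
open Real

/-- For all sufficiently large `n` and all integers `m` with `1 ≤ m < n/10`,
`C(2n, 4m)² · (2m/n)^(32 m log n) ≤ 1/n³`. -/
theorem choose_expander_bound :
    ∃ n₀ : ℕ, ∀ n ≥ n₀, ∀ m : ℕ, 1 ≤ m → (m : ℝ) < (n : ℝ) / 10 →
      ((Nat.choose (2 * n) (4 * m) : ℝ)) ^ 2 *
        ((2 * m : ℝ) / n) ^ ((32 * m : ℝ) * Real.log n) ≤ 1 / (n : ℝ) ^ 3 := by
  use 2
  intro n hn m hm hmn
  have hnR : (2:ℝ) ≤ n := by exact_mod_cast hn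
  have hn0 : (0:ℝ) < n := by linarith
  have hmR : (1:ℝ) ≤ m := by exact_mod_cast hm
  have hm0 : (0:ℝ) < m := by linarith
  have hlog2 : (0.6931471803:ℝ) < Real.log 2 := Real.log_two_gt_d9
  have hlogn : Real.log 2 ≤ Real.log n := Real.log_le_log two_pos hnR
  have hlogn0 : 0 < Real.log n := by linarith
  have hlog5 : 2 * Real.log 2 ≤ Real.log 5 := by
    have h4 : Real.log 4 ≤ Real.log 5 := Real.log_le_log (by norm_num) (by norm_num)
    have : Real.log 4 = 2 * Real.log 2 := by
      rw [show (4:ℝ) = 2 ^ 2 by norm_num, Real.log_pow]; push_cast; ring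
    linarith
  set x : ℝ := (2 * m : ℝ) / n with hx
  have hx0 : 0 < x := by positivity
  have hx5 : x ≤ 1 / 5 := by
    rw [hx, div_le_div_iff₀ hn0 (by norm_num)]
    linarith
  have he0 : 0 ≤ (32 * m : ℝ) * Real.log n := by positivity
  -- bound the choose term
  have hchoose : ((Nat.choose (2 * n) (4 * m) : ℝ)) ≤ ((2 * n : ℝ)) ^ (4 * m) := by
    have := Nat.choose_le_pow (2 * n) (4 * m)
    exact_mod_cast this
  have hch0 : (0:ℝ) ≤ ((Nat.choose (2 * n) (4 * m) : ℝ)) := by positivity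
  have step1 : ((Nat.choose (2 * n) (4 * m) : ℝ)) ^ 2 *
      x ^ ((32 * m : ℝ) * Real.log n)
      ≤ ((2 * n : ℝ)) ^ (8 * m) * (1/5 : ℝ) ^ ((32 * m : ℝ) * Real.log n) := by
    have h1 : ((Nat.choose (2 * n) (4 * m) : ℝ)) ^ 2 ≤ ((2 * n : ℝ)) ^ (8 * m) := by
      have : ((2 * n : ℝ)) ^ (4 * m) * ((2 * n : ℝ)) ^ (4 * m) = ((2 * n : ℝ)) ^ (8 * m) := by
        rw [← pow_add]; ring_nf
      calc ((Nat.choose (2 * n) (4 * m) : ℝ)) ^ 2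
          ≤ ((2 * n : ℝ)) ^ (4 * m) * ((2 * n : ℝ)) ^ (4 * m) := by
            rw [sq]; exact mul_le_mul hchoose hchoose hch0 (by positivity)
        _ = _ := this
    have h2 : x ^ ((32 * m : ℝ) * Real.log n) ≤ (1/5 : ℝ) ^ ((32 * m : ℝ) * Real.log n) :=
      Real.rpow_le_rpow hx0.le hx5 he0
    exact mul_le_mul h1 h2 (by positivity) (by positivity)
  have step2 : ((2 * n : ℝ)) ^ (8 * m) * (1/5 : ℝ) ^ ((32 * m : ℝ) * Real.log n)
      ≤ 1 / (n : ℝ) ^ 3 := by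
    have e1 : ((2 * n : ℝ)) ^ (8 * m) = Real.exp ((8 * m : ℝ) * Real.log (2 * n)) := by
      rw [← Real.rpow_natCast (2 * (n:ℝ)) (8 * m), Real.rpow_def_of_pos (by positivity)]
      push_cast; ring_nf
    have e2 : (1/5 : ℝ) ^ ((32 * m : ℝ) * Real.log n)
        = Real.exp (((32 * m : ℝ) * Real.log n) * Real.log (1/5)) := by
      rw [Real.rpow_def_of_pos (by norm_num)]; ring_nf
    have e3 : 1 / (n : ℝ) ^ 3 = Real.exp (-(3 * Real.log n)) := by
      have h3 : Real.log ((n:ℝ) ^ 3) = 3 * Real.log n := by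
        rw [Real.log_pow]; norm_num
      rw [Real.exp_neg, ← h3, Real.exp_log (by positivity), one_div]
    rw [e1, e2, e3, ← Real.exp_add, Real.exp_le_exp]
    have l2n : Real.log (2 * n) = Real.log 2 + Real.log n :=
      Real.log_mul (by norm_num) (by positivity)
    have l5 : Real.log (1/5 : ℝ) = -Real.log 5 := by
      rw [one_div, Real.log_inv]
    rw [l2n, l5]
    nlinarith [mul_le_mul hmR hlogn (by linarith) hm0.le,
      mul_nonneg hm0.le hlogn0.le, mul_pos hm0 hlogn0,
      mul_le_mul_of_nonneg_left hlog5 (mul_nonneg hm0.le hlogn0.le)]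
  exact step1.trans step2
end
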